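/- arXiv:2307.13837 — 3 statements merged into one kernel-verified Lean document; each statement's English description precedes it below -/
import Mathlib

section
/- Define UNIFORM(n) recursively for positive integers n: let b = ⌊log₂ n⌋; with probability 2^b/n return the sum Σ_{i=0}^{b-1} Y_i · 2^i where the Y_i are independent Bernoulli(1/2); otherwise (with probability (n - 2^b)/n) return UNIFORM(n - 2^b) + 2^b, using fresh independent randomness. Then for all n > 0 and all 0 ≤ i < n, Pr(UNIFORM(n) = i) = 1/n. -/
/-! Every value `i < n` gets mass `1/n` from exactly one branch: if `i < 2^b`, directly as
`(2^b/n)·(1/2^b)`; otherwise, by strong induction on `n`, as `((n - 2^b)/n)·(1/(n - 2^b))`. -/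

/-- The probability mass function of the distribution produced by the recursive
algorithm `UNIFORM(n)`: with probability `2^b / n` (where `b = ⌊log₂ n⌋`) it
returns a uniformly random integer in `{0, …, 2^b - 1}` (obtained from `b`
independent fair coin flips, each value having mass `1 / 2^b`), and with
probability `(n - 2^b) / n` it returns `UNIFORM(n - 2^b) + 2^b`. -/
noncomputable def uniformAlgPMF : ℕ → ℕ → ℝ
  | 0, _ => 0
  | (n + 1), i =>
    let b := Nat.log 2 (n + 1)
    ((2 ^ b : ℝ) / (n + 1)) * (if i < 2 ^ b then (1 : ℝ) / 2 ^ b else 0) +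
      (((n + 1 : ℕ) - 2 ^ b : ℕ) : ℝ) / (n + 1) *
        (if 2 ^ b ≤ i then uniformAlgPMF ((n + 1) - 2 ^ b) (i - 2 ^ b) else 0)
  termination_by n => n
  decreasing_by
    have h1 : 0 < 2 ^ Nat.log 2 (n + 1) := by positivity
    omega

theorem uniformAlgPMF_eq_of_pos {n : ℕ} (hn : 0 < n) (i : ℕ) :
    uniformAlgPMF n i =
      ((2 ^ Nat.log 2 n : ℝ) / n) * (if i < 2 ^ Nat.log 2 n then 1 / 2 ^ Nat.log 2 n else 0) +
        ((n - 2 ^ Nat.log 2 n : ℕ) : ℝ) / n *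
          (if 2 ^ Nat.log 2 n ≤ i then
            uniformAlgPMF (n - 2 ^ Nat.log 2 n) (i - 2 ^ Nat.log 2 n) else 0) := by
  obtain ⟨m, rfl⟩ := Nat.exists_eq_add_one_of_ne_zero hn.ne'
  rw [uniformAlgPMF]
  push_cast
  rfl

theorem uniformAlgPMF_of_lt_two_pow_log {n i : ℕ} (hn : 0 < n) (hi : i < 2 ^ Nat.log 2 n) :
    uniformAlgPMF n i = 1 / n := by
  rw [uniformAlgPMF_eq_of_pos hn, if_pos hi, if_neg hi.not_ge, mul_zero, add_zero]
  field_simp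

theorem uniformAlgPMF_of_two_pow_log_le {n i : ℕ} (hn : 0 < n) (hi : 2 ^ Nat.log 2 n ≤ i) :
    uniformAlgPMF n i =
      ((n - 2 ^ Nat.log 2 n : ℕ) : ℝ) / n *
        uniformAlgPMF (n - 2 ^ Nat.log 2 n) (i - 2 ^ Nat.log 2 n) := by
  rw [uniformAlgPMF_eq_of_pos hn, if_neg hi.not_gt, if_pos hi, mul_zero, zero_add]

/-- Correctness of the UNIFORM algorithm: for every `n > 0` and every `0 ≤ i < n`,
`Pr(UNIFORM(n) = i) = 1/n`. -/
theorem uniformAlg_correct : ∀ n : ℕ, 0 < n → ∀ i < n, uniformAlgPMF n i = 1 / n := by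
  intro n
  induction n using Nat.strong_induction_on with
  | _ n ih =>
    intro hn i hi
    by_cases hib : i < 2 ^ Nat.log 2 n
    · exact uniformAlgPMF_of_lt_two_pow_log hn hib
    have hbn : 2 ^ Nat.log 2 n ≤ n := Nat.pow_log_le_self 2 hn.ne'
    have hrest : 0 < n - 2 ^ Nat.log 2 n := by omega
    rw [uniformAlgPMF_of_two_pow_log_le hn (not_lt.mp hib),
      ih _ (Nat.sub_lt hn (Nat.two_pow_pos _)) hrest _ (by omega)]
    have hrest_ne : ((n - 2 ^ Nat.log 2 n : ℕ) : ℝ) ≠ 0 := by exact_mod_cast hrest.ne'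
    field_simp
end

section
/- The number of decision nodes in the reduced multi-rooted BDD (in flip-evaluation variable order) for the CATEG_INT encoding of a distribution over {0,...,2^b - 1} with all conditional probabilities strictly between 0 and 1 is exactly Σ_{i=1}^{b} (2^b - 2^{i-1}) = b·2^b - 2^b + 1. -/
/-- The restriction (subfunction) of `f` obtained by fixing the variables
`x_0, …, x_{t-1}` to the values given by `v`. -/
def restrictF (f : (ℕ → Bool) → Bool) (t : ℕ) (v : ℕ → Bool) : (ℕ → Bool) → Bool :=
  fun x => f (fun j => if j < t then v j else x j)

/-- `g` essentially depends on the variable `x_t`. -/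
def dependsOn (g : (ℕ → Bool) → Bool) (t : ℕ) : Prop :=
  ∃ x : ℕ → Bool, g (Function.update x t true) ≠ g (Function.update x t false)

/-- The number of decision nodes of the reduced multi-rooted ordered BDD (with
variable order `x_0 < x_1 < ⋯ < x_{numVars - 1}`) for the family of root
functions `F`: by the canonicity of reduced OBDDs, the decision nodes labeled
`x_t` correspond exactly to the distinct subfunctions obtained from some root by
fixing the variables below `t` that essentially depend on `x_t` (shared across
all roots). -/
noncomputable def bddNodeCount (F : Set ((ℕ → Bool) → Bool)) (numVars : ℕ) : ℕ :=
  ∑ t ∈ Finset.range numVars,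
    Set.ncard {g | (∃ f ∈ F, ∃ v, g = restrictF f t v) ∧ dependsOn g t}

/-- The integer value produced by the CATEG_INT encoding: the least index
`j < 2^b - 1` with `x j` true, or `2^b - 1` if all are false. -/
noncomputable def categValue (b : ℕ) (x : ℕ → Bool) : ℕ :=
  sInf ({j | j < 2 ^ b - 1 ∧ x j = true} ∪ {2 ^ b - 1})



lemma categValue_eq (b m : ℕ) (x : ℕ → Bool)
    (hm : m = 2 ^ b - 1 ∨ (m < 2 ^ b - 1 ∧ x m = true))
    (hlt : ∀ j, j < m → j < 2 ^ b - 1 → x j = false) :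
    categValue b x = m := by
  have hmem : m ∈ ({j | j < 2 ^ b - 1 ∧ x j = true} ∪ {2 ^ b - 1} : Set ℕ) := by
    rcases hm with h | ⟨h1, h2⟩
    · exact Or.inr h
    · exact Or.inl ⟨h1, h2⟩
  refine le_antisymm (Nat.sInf_le hmem) ?_
  by_contra h
  push_neg at h
  have hmem' := Nat.sInf_mem (⟨m, hmem⟩ : Set.Nonempty ({j | j < 2 ^ b - 1 ∧ x j = true} ∪ {2 ^ b - 1}))
  have hle : m ≤ 2 ^ b - 1 := by rcases hm with h' | ⟨h1, _⟩ <;> omega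
  rcases hmem' with ⟨h1, h2⟩ | h3
  · have := hlt _ h h1
    simp_all [categValue]
  · simp only [Set.mem_singleton_iff] at h3
    unfold categValue at h
    omega

lemma categValue_le (b : ℕ) (x : ℕ → Bool) : categValue b x ≤ 2 ^ b - 1 :=
  Nat.sInf_le (Or.inr rfl)

lemma categValue_cases (b : ℕ) (x : ℕ → Bool) :
    categValue b x = 2 ^ b - 1 ∨
      (categValue b x < 2 ^ b - 1 ∧ x (categValue b x) = true) := by
  have hmem := Nat.sInf_mem (⟨2 ^ b - 1, Or.inr rfl⟩ :
    Set.Nonempty ({j | j < 2 ^ b - 1 ∧ x j = true} ∪ {2 ^ b - 1}))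
  rcases hmem with ⟨h1, h2⟩ | h3
  · exact Or.inr ⟨h1, h2⟩
  · exact Or.inl h3

lemma categValue_congr (b : ℕ) (x y : ℕ → Bool)
    (h : ∀ j, j < 2 ^ b - 1 → x j = y j) : categValue b x = categValue b y := by
  unfold categValue
  congr 1
  ext j
  simp only [Set.mem_union, Set.mem_setOf_eq, Set.mem_singleton_iff]
  constructor
  · rintro (⟨h1, h2⟩ | h3)
    · exact Or.inl ⟨h1, by rw [← h j h1]; exact h2⟩
    · exact Or.inr h3
  · rintro (⟨h1, h2⟩ | h3)
    · exact Or.inl ⟨h1, by rw [h j h1]; exact h2⟩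
    · exact Or.inr h3

lemma testBit_of_div (m i q : ℕ) (h1 : q * 2 ^ i ≤ m) (h2 : m < (q + 1) * 2 ^ i) :
    m.testBit i = decide (q % 2 = 1) := by
  rw [Nat.testBit_eq_decide_div_mod_eq, Nat.div_eq_of_lt_le h1 h2]

lemma bit_high {b i m : ℕ} (hi : i < b) (h1 : 2 ^ b - 2 ^ i ≤ m) (h2 : m < 2 ^ b) :
    m.testBit i = true := by
  have key : (2 ^ (b - i) - 1) * 2 ^ i = 2 ^ b - 2 ^ i := by
    rw [Nat.sub_mul, one_mul, ← pow_add, Nat.sub_add_cancel hi.le]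
  have key2 : (2 ^ (b - i) - 1 + 1) * 2 ^ i = 2 ^ b := by
    have h3 : 1 ≤ 2 ^ (b - i) := Nat.one_le_two_pow
    rw [Nat.sub_add_cancel h3, ← pow_add, Nat.sub_add_cancel hi.le]
  rw [testBit_of_div m i (2 ^ (b - i) - 1) (by omega) (by omega)]
  have heven : 2 ∣ 2 ^ (b - i) := dvd_pow_self 2 (by omega)
  have h4 : 1 ≤ 2 ^ (b - i) := Nat.one_le_two_pow
  simp only [decide_eq_true_eq]
  omega

lemma bit_m0 {b i i' : ℕ} (hi : i < b) (hi' : i' < b) :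
    (2 ^ b - 1 - 2 ^ i).testBit i' = decide (i' ≠ i) := by
  have h2b : (2 : ℕ) ^ i < 2 ^ b := Nat.pow_lt_pow_right one_lt_two hi
  have hpos : (1 : ℕ) ≤ 2 ^ i := Nat.one_le_two_pow
  have hpos' : (1 : ℕ) ≤ 2 ^ i' := Nat.one_le_two_pow
  rcases lt_trichotomy i' i with hlt | heq | hgt
  · -- i' < i : quotient is 2^(b-i') - 2^(i-i') - 1, odd
    have eb : b - i' + i' = b := by omega
    have ei : i - i' + i' = i := by omega
    have e1 : (2 ^ (b - i') - 2 ^ (i - i') - 1) * 2 ^ i' = 2 ^ b - 2 ^ i - 2 ^ i' := by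
      rw [Nat.sub_mul, Nat.sub_mul, one_mul, ← pow_add, ← pow_add, eb, ei]
    have hBA : (2 : ℕ) ^ (i - i') < 2 ^ (b - i') := Nat.pow_lt_pow_right one_lt_two (by omega)
    have hB1 : (1 : ℕ) ≤ 2 ^ (i - i') := Nat.one_le_two_pow
    have e2 : (2 ^ (b - i') - 2 ^ (i - i') - 1 + 1) * 2 ^ i' = 2 ^ b - 2 ^ i := by
      have : 2 ^ (b - i') - 2 ^ (i - i') - 1 + 1 = 2 ^ (b - i') - 2 ^ (i - i') := by omega
      rw [this, Nat.sub_mul, ← pow_add, ← pow_add, eb, ei]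
    have hii' : (2 : ℕ) ^ i' ≤ 2 ^ i := Nat.pow_le_pow_right (by norm_num) hlt.le
    rw [testBit_of_div _ _ (2 ^ (b - i') - 2 ^ (i - i') - 1) (by omega) (by omega)]
    have d1 : 2 ∣ 2 ^ (b - i') := dvd_pow_self 2 (by omega)
    have d2 : 2 ∣ 2 ^ (i - i') := dvd_pow_self 2 (by omega)
    simp only [decide_eq_decide]
    omega
  · -- i' = i : quotient is 2^(b-i) - 2, even
    subst heq
    have eb : b - i' + i' = b := by omega
    have e1 : (2 ^ (b - i') - 2) * 2 ^ i' = 2 ^ b - 2 ^ i' - 2 ^ i' := by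
      rw [Nat.sub_mul, ← pow_add, eb, two_mul, ← Nat.sub_sub]
    have hA2 : (2 : ℕ) ≤ 2 ^ (b - i') := by
      calc (2:ℕ) = 2 ^ 1 := rfl
      _ ≤ 2 ^ (b - i') := Nat.pow_le_pow_right (by norm_num) (by omega)
    have e2 : (2 ^ (b - i') - 2 + 1) * 2 ^ i' = 2 ^ b - 2 ^ i' := by
      have h3 : 2 ^ (b - i') - 2 + 1 = 2 ^ (b - i') - 1 := by omega
      rw [h3, Nat.sub_mul, one_mul, ← pow_add, eb]
    rw [testBit_of_div _ _ (2 ^ (b - i') - 2) (by omega) (by omega)]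
    have d1 : 2 ∣ 2 ^ (b - i') := dvd_pow_self 2 (by omega)
    simp only [decide_eq_decide]
    omega
  · -- i < i' : quotient is 2^(b-i') - 1, odd
    have eb : b - i' + i' = b := by omega
    have e1 : (2 ^ (b - i') - 1) * 2 ^ i' = 2 ^ b - 2 ^ i' := by
      rw [Nat.sub_mul, one_mul, ← pow_add, eb]
    have e2 : (2 ^ (b - i') - 1 + 1) * 2 ^ i' = 2 ^ b := by
      rw [Nat.sub_add_cancel Nat.one_le_two_pow, ← pow_add, eb]
    have hii' : (2 : ℕ) ^ i < 2 ^ i' := Nat.pow_lt_pow_right one_lt_two hgt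
    rw [testBit_of_div _ _ (2 ^ (b - i') - 1) (by omega) (by omega)]
    have d1 : 2 ∣ 2 ^ (b - i') := dvd_pow_self 2 (by omega)
    have h4 : (1 : ℕ) ≤ 2 ^ (b - i') := Nat.one_le_two_pow
    simp only [decide_eq_decide]
    omega

noncomputable def Gfun (b i t : ℕ) : (ℕ → Bool) → Bool :=
  restrictF (fun x => (categValue b x).testBit i) t (fun _ => false)

lemma Gfun_apply (b i t : ℕ) (x : ℕ → Bool) :
    Gfun b i t x = (categValue b (fun j => if j < t then false else x j)).testBit i := rfl

lemma categ_indicator (b t m0 : ℕ) (ht : t ≤ m0) (hm0 : m0 < 2 ^ b - 1) :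
    categValue b (fun j => if j < t then false else decide (j = m0)) = m0 := by
  apply categValue_eq
  · right
    refine ⟨hm0, ?_⟩
    rw [if_neg (by omega)]
    simp
  · intro j hj _
    by_cases h : j < t
    · simp [h]
    · simp [h, Nat.ne_of_lt hj]

lemma Gfun_indicator (b i t m0 : ℕ) (ht : t ≤ m0) (hm0 : m0 < 2 ^ b - 1) :
    Gfun b i t (fun j => decide (j = m0)) = m0.testBit i := by
  rw [Gfun_apply, categ_indicator b t m0 ht hm0]

lemma categ_merge_ge (b t : ℕ) (ht : t < 2 ^ b - 1) (x : ℕ → Bool) :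
    t ≤ categValue b (fun j => if j < t then false else x j) := by
  by_contra h
  push_neg at h
  rcases categValue_cases b (fun j => if j < t then false else x j) with h1 | ⟨h1, h2⟩
  · omega
  · rw [if_pos h] at h2
    exact Bool.noConfusion h2

lemma Gfun_const (b i t : ℕ) (hi : i < b) (ht : t < 2 ^ b - 1) (hbig : 2 ^ b ≤ t + 2 ^ i)
    (x : ℕ → Bool) : Gfun b i t x = true := by
  rw [Gfun_apply]
  have h1 := categ_merge_ge b t ht x
  have h2 := categValue_le b (fun j => if j < t then false else x j)
  have hp : (1 : ℕ) ≤ 2 ^ b := Nat.one_le_two_pow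
  exact bit_high hi (by omega) (by omega)

lemma Gfun_depends (b i t : ℕ) (hi : i < b) (ht : t < 2 ^ b - 1) (hsmall : t + 2 ^ i < 2 ^ b) :
    dependsOn (Gfun b i t) t := by
  have hpi : (1 : ℕ) ≤ 2 ^ i := Nat.one_le_two_pow
  have h2b : (2 : ℕ) ^ i < 2 ^ b := Nat.pow_lt_pow_right one_lt_two hi
  set m0 := 2 ^ b - 1 - 2 ^ i with hm0def
  have htm0 : t ≤ m0 := by omega
  have hm0N : m0 < 2 ^ b - 1 := by omega
  have hbitm0 : m0.testBit i = false := by rw [hm0def, bit_m0 hi hi]; simp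
  have hbitN : (2 ^ b - 1).testBit i = true := bit_high hi (by omega) (by omega)
  by_cases hbt : t.testBit i = true
  · have htne : t ≠ m0 := by
      intro h
      rw [h, hbitm0] at hbt
      exact Bool.noConfusion hbt
    refine ⟨fun j => decide (j = m0), ?_⟩
    have e1 : Gfun b i t (Function.update (fun j => decide (j = m0)) t true) = t.testBit i := by
      rw [Gfun_apply]
      congr 1
      apply categValue_eq
      · right
        refine ⟨ht, ?_⟩
        rw [if_neg (lt_irrefl t), Function.update_self]
      · intro j hj _
        rw [if_pos hj]
    have e2 : Gfun b i t (Function.update (fun j => decide (j = m0)) t false) = m0.testBit i := by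
      rw [Gfun_apply]
      congr 1
      apply categValue_eq
      · right
        refine ⟨hm0N, ?_⟩
        rw [if_neg (by omega), Function.update_apply, if_neg (Ne.symm htne)]
        simp
      · intro j hj _
        by_cases h : j < t
        · rw [if_pos h]
        · rw [if_neg h, Function.update_apply]
          by_cases h2 : j = t
          · rw [if_pos h2]
          · rw [if_neg h2]
            simp [Nat.ne_of_lt hj]
    rw [e1, e2, hbt, hbitm0]
    simp
  · refine ⟨fun _ => false, ?_⟩
    have e1 : Gfun b i t (Function.update (fun _ : ℕ => false) t true) = t.testBit i := by
      rw [Gfun_apply]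
      congr 1
      apply categValue_eq
      · right
        refine ⟨ht, ?_⟩
        rw [if_neg (lt_irrefl t), Function.update_self]
      · intro j hj _
        rw [if_pos hj]
    have e2 : Gfun b i t (Function.update (fun _ : ℕ => false) t false) = (2 ^ b - 1).testBit i := by
      rw [Gfun_apply]
      congr 1
      apply categValue_eq
      · left; rfl
      · intro j hj _
        by_cases h : j < t
        · rw [if_pos h]
        · rw [if_neg h, Function.update_apply]
          simp
    rw [e1, e2, hbitN]
    simp [Bool.not_eq_true] at hbt
    rw [hbt]
    simp

lemma key_set (b t : ℕ) (ht : t < 2 ^ b - 1) :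
    {g | (∃ f ∈ {f : (ℕ → Bool) → Bool | ∃ i < b, f = fun x => (categValue b x).testBit i},
        ∃ v, g = restrictF f t v) ∧ dependsOn g t}
      = (fun i => Gfun b i t) '' {i | i < b ∧ t + 2 ^ i < 2 ^ b} := by
  ext g
  simp only [Set.mem_setOf_eq, Set.mem_image]
  constructor
  · rintro ⟨⟨f, ⟨i, hib, rfl⟩, v, rfl⟩, hdep⟩
    by_cases hv : ∃ j, j < t ∧ j < 2 ^ b - 1 ∧ v j = true
    · exfalso
      obtain ⟨hj0t, hj0N, hvj0⟩ := Nat.find_spec hv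
      have hconst : ∀ x, restrictF (fun x => (categValue b x).testBit i) t v x
          = (Nat.find hv).testBit i := by
        intro x
        show (categValue b (fun j => if j < t then v j else x j)).testBit i = _
        congr 1
        apply categValue_eq
        · right
          exact ⟨hj0N, by rw [if_pos hj0t]; exact hvj0⟩
        · intro j hj hjN
          have hmin : ¬(j < t ∧ j < 2 ^ b - 1 ∧ v j = true) := Nat.find_min hv hj
          rw [if_pos (by omega)]
          by_contra hc
          exact hmin ⟨by omega, hjN, by simpa using hc⟩
      obtain ⟨x, hx⟩ := hdep
      rw [hconst, hconst] at hx
      exact hx rfl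
    · push_neg at hv
      have hg : restrictF (fun x => (categValue b x).testBit i) t v = Gfun b i t := by
        funext x
        show (categValue b (fun j => if j < t then v j else x j)).testBit i
          = (categValue b (fun j => if j < t then false else x j)).testBit i
        congr 1
        apply categValue_congr
        intro j hjN
        by_cases h : j < t
        · rw [if_pos h, if_pos h]
          exact Bool.not_eq_true _ ▸ (by simpa using hv j h hjN)
        · rw [if_neg h, if_neg h]
      rw [hg] at hdep ⊢
      refine ⟨i, ⟨hib, ?_⟩, rfl⟩
      by_contra hbig
      push_neg at hbig
      obtain ⟨x, hx⟩ := hdep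
      rw [Gfun_const b i t hib ht hbig, Gfun_const b i t hib ht hbig] at hx
      exact hx rfl
  · rintro ⟨i, ⟨hib, hsmall⟩, rfl⟩
    exact ⟨⟨_, ⟨i, hib, rfl⟩, fun _ => false, rfl⟩, Gfun_depends b i t hib ht hsmall⟩

lemma per_t (b t : ℕ) (ht : t < 2 ^ b - 1) :
    Set.ncard {g | (∃ f ∈ {f : (ℕ → Bool) → Bool | ∃ i < b, f = fun x => (categValue b x).testBit i},
        ∃ v, g = restrictF f t v) ∧ dependsOn g t}
      = ((Finset.range b).filter fun i => t + 2 ^ i < 2 ^ b).card := by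
  rw [key_set b t ht]
  have hset : {i | i < b ∧ t + 2 ^ i < 2 ^ b}
      = ↑((Finset.range b).filter fun i => t + 2 ^ i < 2 ^ b) := by
    ext i
    simp [Finset.mem_filter]
  rw [hset, Set.ncard_image_of_injOn, Set.ncard_coe_finset]
  intro i hi i' hi' hEq
  simp only [Finset.coe_filter, Finset.mem_range, Set.mem_setOf_eq] at hi hi'
  by_contra hne
  have hm0N : 2 ^ b - 1 - 2 ^ i < 2 ^ b - 1 := by
    have h1 : (1 : ℕ) ≤ 2 ^ i := Nat.one_le_two_pow
    have h2 : (2 : ℕ) ^ i < 2 ^ b := Nat.pow_lt_pow_right one_lt_two hi.1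
    omega
  have htm0 : t ≤ 2 ^ b - 1 - 2 ^ i := by
    have h2 : (2 : ℕ) ^ i < 2 ^ b := Nat.pow_lt_pow_right one_lt_two hi.1
    omega
  have h1 := congrFun hEq (fun j => decide (j = 2 ^ b - 1 - 2 ^ i))
  simp only at h1
  rw [Gfun_indicator b i t _ htm0 hm0N, Gfun_indicator b i' t _ htm0 hm0N,
    bit_m0 hi.1 hi.1, bit_m0 hi.1 hi'.1] at h1
  rw [decide_eq_decide] at h1
  exact (h1.mpr (Ne.symm hne)) rfl

lemma geom_two (n : ℕ) : ∑ i ∈ Finset.range n, 2 ^ i = 2 ^ n - 1 := by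
  induction n with
  | zero => simp
  | succ n ih =>
    rw [Finset.sum_range_succ, ih, pow_succ]
    have : (1 : ℕ) ≤ 2 ^ n := Nat.one_le_two_pow
    omega

lemma final_sum (b : ℕ) (hb : 1 ≤ b) :
    ∑ t ∈ Finset.range (2 ^ b - 1), ((Finset.range b).filter fun i => t + 2 ^ i < 2 ^ b).card
      = b * 2 ^ b - 2 ^ b + 1 := by
  have step1 : ∀ t, ((Finset.range b).filter fun i => t + 2 ^ i < 2 ^ b).card
      = ∑ i ∈ Finset.range b, if t + 2 ^ i < 2 ^ b then 1 else 0 := fun t =>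
    Finset.card_filter _ _
  simp only [step1]
  rw [Finset.sum_comm]
  have step2 : ∀ i ∈ Finset.range b,
      (∑ t ∈ Finset.range (2 ^ b - 1), if t + 2 ^ i < 2 ^ b then 1 else 0)
        = 2 ^ b - 2 ^ i := by
    intro i hi
    rw [Finset.mem_range] at hi
    have h1 : (2 : ℕ) ^ i < 2 ^ b := Nat.pow_lt_pow_right one_lt_two hi
    have h2 : (1 : ℕ) ≤ 2 ^ i := Nat.one_le_two_pow
    rw [← Finset.card_filter]
    have : (Finset.range (2 ^ b - 1)).filter (fun t => t + 2 ^ i < 2 ^ b)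
        = Finset.range (2 ^ b - 2 ^ i) := by
      ext t
      simp only [Finset.mem_filter, Finset.mem_range]
      omega
    rw [this, Finset.card_range]
  rw [Finset.sum_congr rfl step2]
  have hsum : (∑ i ∈ Finset.range b, (2 ^ b - 2 ^ i)) + ∑ i ∈ Finset.range b, 2 ^ i
      = ∑ i ∈ Finset.range b, 2 ^ b := by
    rw [← Finset.sum_add_distrib]
    apply Finset.sum_congr rfl
    intro i hi
    have : (2 : ℕ) ^ i ≤ 2 ^ b :=
      Nat.pow_le_pow_right (by norm_num) (le_of_lt (Finset.mem_range.mp hi))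
    omega
  rw [Finset.sum_const, Finset.card_range, smul_eq_mul, geom_two] at hsum
  have hb1 : (1 : ℕ) ≤ 2 ^ b := Nat.one_le_two_pow
  have hge : 2 ^ b ≤ b * 2 ^ b := Nat.le_mul_of_pos_left _ hb
  obtain ⟨M, hM⟩ : ∃ M, b * 2 ^ b = M := ⟨_, rfl⟩
  rw [hM] at hsum hge ⊢
  clear hM
  omega


/-- The reduced multi-rooted BDD (in flip evaluation order `x_0 < x_1 < ⋯`) for
the CATEG_INT encoding of a distribution over `{0, …, 2^b - 1}` — whose roots
are the `b` output bit functions of `categValue` — has exactly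
`Σ_{i=1}^{b} (2^b - 2^(i-1)) = b·2^b - 2^b + 1` decision nodes. -/
theorem categ_int_bdd_size (b : ℕ) (hb : 1 ≤ b) :
    bddNodeCount {f | ∃ i < b, f = fun x => (categValue b x).testBit i}
        (2 ^ b - 1) =
      b * 2 ^ b - 2 ^ b + 1 := by
  unfold bddNodeCount
  rw [Finset.sum_congr rfl fun t ht => per_t b t (Finset.mem_range.mp ht)]
  exact final_sum b hb
end

section
/- The number of decision nodes in the reduced multi-rooted BDD (in flip-evaluation variable order) for the BITWISE_INT encoding of a distribution over {0,...,2^b - 1} is exactly Σ_{i=1}^{b} (2^i - 1) = 2^{b+1} - b - 2. -/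
/-- The index of the decision variable `x_s` of the BITWISE_INT encoding in the
flip evaluation order (consistent with the prefix order on bit strings): strings
are ordered by length and then by their binary value. -/
def varIdx (s : List Bool) : ℕ :=
  2 ^ s.length - 1 + s.foldl (fun a bit => 2 * a + bit.toNat) 0

/-- The prefix of bits chosen by the BITWISE_INT process under the assignment
`x` to the decision variables: having chosen prefix `s`, the next bit is the
value of the variable `x_s`. -/
def chosenPrefix (x : ℕ → Bool) : ℕ → List Bool
  | 0 => []
  | n + 1 => chosenPrefix x n ++ [x (varIdx (chosenPrefix x n))]

/-!
`varIdx` is the heap numbering of the complete binary tree of bit strings (the children of `n`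
are `2n+1` and `2n+2`), so `x_t` is `x_s` for the unique `s` with `|s| = log₂ (t+1)`. After fixing
the variables before `x_s`, the root for bit `i` either never reads `x_s`, or (when `|s| ≤ i` and
the fixed values lead to `s`) becomes `bitBelow s (i - |s|)`: walk `i - |s|` more steps down
from `s` and output the bit read there. These functions are pairwise distinct and all depend on
`x_s`, so level `t` carries `b - log₂ (t+1)` nodes, and summing over levels gives
`Σ_{d<b} 2^d (b - d) = 2^(b+1) - b - 2`.
-/

lemma varIdx_append_singleton (s : List Bool) (c : Bool) :
    varIdx (s ++ [c]) = 2 * varIdx s + 1 + c.toNat := by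
  have := Nat.one_le_two_pow (n := s.length)
  simp only [varIdx, List.foldl_append, List.foldl_cons, List.foldl_nil, List.length_append,
    List.length_singleton, pow_succ]
  omega

lemma varIdx_add_one_mem_Ico (s : List Bool) :
    varIdx s + 1 ∈ Set.Ico (2 ^ s.length) (2 ^ (s.length + 1)) := by
  induction s using List.reverseRecOn with
  | nil => simp [varIdx]
  | append_singleton s c ih =>
    have := Bool.toNat_le c
    rw [Set.mem_Ico, pow_succ] at ih
    rw [Set.mem_Ico, varIdx_append_singleton, List.length_append, List.length_singleton,
      pow_succ, pow_succ]
    omega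

lemma log_varIdx_add_one (s : List Bool) : Nat.log 2 (varIdx s + 1) = s.length :=
  Nat.log_eq_of_pow_le_of_lt_pow (varIdx_add_one_mem_Ico s).1 (varIdx_add_one_mem_Ico s).2

lemma varIdx_lt_varIdx_of_length_lt {p q : List Bool} (h : p.length < q.length) :
    varIdx p < varIdx q := by
  by_contra! hle
  have := Nat.log_mono_right (b := 2) (Nat.succ_le_succ hle)
  rw [log_varIdx_add_one, log_varIdx_add_one] at this
  omega

lemma varIdx_injective : Function.Injective varIdx := by
  have varIdx_nil : varIdx [] = 0 := rfl
  intro p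
  induction p using List.reverseRecOn with
  | nil =>
    intro q h
    rcases List.eq_nil_or_concat' q with rfl | ⟨q, c, rfl⟩
    · rfl
    · rw [varIdx_append_singleton] at h
      omega
  | append_singleton p c ih =>
    intro q h
    rcases List.eq_nil_or_concat' q with rfl | ⟨q, d, rfl⟩
    · rw [varIdx_append_singleton] at h
      omega
    · rw [varIdx_append_singleton, varIdx_append_singleton] at h
      obtain rfl : c = d := by cases c <;> cases d <;> simp at h ⊢ <;> omega
      exact congrArg (· ++ [c]) (ih (by omega : varIdx p = varIdx q))

lemma varIdx_surjective : Function.Surjective varIdx := by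
  intro n
  induction n using Nat.strong_induction_on with
  | _ n ih =>
    rcases n with _ | n
    · exact ⟨[], rfl⟩
    obtain ⟨s, hs⟩ := ih (n / 2) (by omega)
    refine ⟨s ++ [decide (n % 2 = 1)], ?_⟩
    rw [varIdx_append_singleton, hs]
    rcases Nat.mod_two_eq_zero_or_one n with h | h <;> simp [h] <;> omega

def descend (s : List Bool) (x : ℕ → Bool) : ℕ → List Bool
  | 0 => s
  | n + 1 => descend s x n ++ [x (varIdx (descend s x n))]

def bitBelow (s : List Bool) (m : ℕ) (x : ℕ → Bool) : Bool :=
  x (varIdx (descend s x m))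

section descend

variable (s : List Bool) (x : ℕ → Bool)

lemma length_descend (n : ℕ) : (descend s x n).length = s.length + n := by
  induction n with
  | zero => rfl
  | succ n ih => simp [descend, ih, Nat.add_assoc]

lemma descend_add (k m : ℕ) : descend s x (k + m) = descend (descend s x k) x m := by
  induction m with
  | zero => rfl
  | succ m ih => rw [← Nat.add_assoc, descend, ih, descend]

lemma descend_succ' (m : ℕ) : descend s x (m + 1) = descend (s ++ [x (varIdx s)]) x m := by
  rw [Nat.add_comm, descend_add]
  rfl

lemma prefix_descend (n : ℕ) : s <+: descend s x n := by
  induction n with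
  | zero => exact List.prefix_refl s
  | succ n ih => exact ih.trans (List.prefix_append _ _)

lemma chosenPrefix_eq_descend (n : ℕ) : chosenPrefix x n = descend [] x n := by
  induction n with
  | zero => rfl
  | succ n ih => rw [chosenPrefix, descend, ih]

lemma varIdx_le_varIdx_descend (n : ℕ) : varIdx s ≤ varIdx (descend s x n) := by
  rcases n with _ | n
  · exact le_rfl
  · exact (varIdx_lt_varIdx_of_length_lt (by rw [length_descend]; omega)).le

variable {s x}

lemma descend_congr {y : ℕ → Bool} {n : ℕ}
    (h : ∀ k < n, x (varIdx (descend s x k)) = y (varIdx (descend s x k))) :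
    descend s x n = descend s y n := by
  induction n with
  | zero => rfl
  | succ n ih =>
    rw [descend, descend, ← ih fun k hk => h k (by omega), h n (by omega)]

end descend

lemma bitBelow_eq_of_path_avoids {s r : List Bool} {x y : ℕ → Bool} {i : ℕ}
    (hxy : ∀ j ≠ varIdx s, x j = y j) (hs : ∀ k ≤ i, descend r x k ≠ s) :
    bitBelow r i x = bitBelow r i y := by
  have hoff : ∀ k ≤ i, varIdx (descend r x k) ≠ varIdx s :=
    fun k hk h => hs k hk (varIdx_injective h)
  have hpath : descend r x i = descend r y i :=
    descend_congr fun k hk => hxy _ (hoff k hk.le)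
  rw [bitBelow, bitBelow, ← hpath, hxy _ (hoff i le_rfl)]

section restrict

variable {s : List Bool} {v : ℕ → Bool}

lemma descend_nil_override_of_le (x : ℕ → Bool) {k : ℕ} (hk : k ≤ s.length) :
    descend [] (fun j => if j < varIdx s then v j else x j) k = descend [] v k := by
  refine (descend_congr fun k' hk' => ?_).symm
  have : varIdx (descend [] v k') < varIdx s :=
    varIdx_lt_varIdx_of_length_lt (by rw [length_descend, List.length_nil]; omega)
  simp [this]

lemma restrictF_bitBelow_nil_of_dependsOn {i : ℕ}
    (h : dependsOn (restrictF (bitBelow [] i) (varIdx s) v) (varIdx s)) :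
    s.length ≤ i ∧ descend [] v s.length = s := by
  obtain ⟨x, hx⟩ := h
  set w : Bool → ℕ → Bool :=
    fun a j => if j < varIdx s then v j else Function.update x (varIdx s) a j
  have hoff : ∀ j ≠ varIdx s, w true j = w false j := by
    intro j hj
    simp only [w, Function.update_of_ne hj]
  obtain ⟨k, hki, hk⟩ : ∃ k ≤ i, descend [] (w true) k = s := by
    by_contra! hne
    exact hx (bitBelow_eq_of_path_avoids hoff hne)
  have hks : k = s.length := by simpa [length_descend] using congrArg List.length hk
  subst hks
  exact ⟨hki, (descend_nil_override_of_le _ le_rfl).symm.trans hk⟩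

lemma restrictF_bitBelow_nil (hv : descend [] v s.length = s) (m : ℕ) :
    restrictF (bitBelow [] (s.length + m)) (varIdx s) v = bitBelow s m := by
  funext x
  set z := fun j => if j < varIdx s then v j else x j
  have hz : ∀ j, varIdx s ≤ j → z j = x j := fun j hj => if_neg (not_lt.2 hj)
  have hpath : descend [] z (s.length + m) = descend s x m := by
    rw [descend_add, descend_nil_override_of_le x le_rfl, hv]
    exact descend_congr fun k _ => hz _ (varIdx_le_varIdx_descend s z k)
  change z (varIdx (descend [] z (s.length + m))) = x (varIdx (descend s x m))
  rw [hpath, hz _ (varIdx_le_varIdx_descend s x m)]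

end restrict

lemma exists_apply_varIdx_eq (φ : List Bool → Bool) :
    ∃ x : ℕ → Bool, ∀ p, x (varIdx p) = φ p :=
  ⟨Function.extend varIdx φ fun _ => false, varIdx_injective.extend_apply φ _⟩

lemma bitBelow_injective (s : List Bool) : Function.Injective (bitBelow s) := by
  intro m m' h
  obtain ⟨x, hx⟩ := exists_apply_varIdx_eq fun p => decide (p.length = s.length + m)
  have := congrFun h x
  simp only [bitBelow, hx, length_descend] at this
  simpa [eq_comm] using this

lemma dependsOn_bitBelow (s : List Bool) (m : ℕ) : dependsOn (bitBelow s m) (varIdx s) := by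
  -- every node strictly below `s` copies the bit chosen at `s`
  obtain ⟨x, hx⟩ := exists_apply_varIdx_eq fun p => p.getD s.length false
  have key : ∀ a, bitBelow s m (Function.update x (varIdx s) a) = a := by
    intro a
    rcases m with _ | m
    · exact Function.update_self ..
    set p := descend s (Function.update x (varIdx s) a) (m + 1)
    have hps : p ≠ s := fun h => by simpa [p, length_descend] using congrArg List.length h
    obtain ⟨u, hu⟩ : s ++ [a] <+: p := by
      simpa only [p, descend_succ', Function.update_self] using prefix_descend _ _ m
    rw [bitBelow, Function.update_of_ne (varIdx_injective.ne hps), hx, ← hu]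
    simp
  exact ⟨x, by rw [key, key]; decide⟩

lemma exists_descend_nil_eq (s : List Bool) : ∃ v, descend [] v s.length = s := by
  obtain ⟨v, hv⟩ := exists_apply_varIdx_eq fun p => s.getD p.length false
  refine ⟨v, ?_⟩
  suffices ∀ k ≤ s.length, descend [] v k = s.take k by simpa using this _ le_rfl
  intro k
  induction k with
  | zero => simp [descend]
  | succ k ih =>
    intro hk
    rw [descend, ih (by omega), hv, List.take_add_one]
    simp [List.getElem?_eq_getElem (by omega : k < s.length),
      Nat.min_eq_left (by omega : k ≤ s.length)]

def nodesAt (F : Set ((ℕ → Bool) → Bool)) (t : ℕ) : Set ((ℕ → Bool) → Bool) :=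
  {g | (∃ f ∈ F, ∃ v, g = restrictF f t v) ∧ dependsOn g t}

lemma nodesAt_bitBelow_nil (b : ℕ) (s : List Bool) :
    nodesAt (bitBelow [] '' Set.Iio b) (varIdx s) = bitBelow s '' Set.Iio (b - s.length) := by
  ext g
  constructor
  · rintro ⟨⟨_, ⟨i, hi, rfl⟩, v, rfl⟩, hdep⟩
    obtain ⟨hle, hv⟩ := restrictF_bitBelow_nil_of_dependsOn hdep
    obtain ⟨m, rfl⟩ := Nat.exists_eq_add_of_le hle
    exact ⟨m, by simp only [Set.mem_Iio] at hi ⊢; omega, (restrictF_bitBelow_nil hv m).symm⟩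
  · rintro ⟨m, hm, rfl⟩
    obtain ⟨v, hv⟩ := exists_descend_nil_eq s
    have hi : s.length + m < b := by simp only [Set.mem_Iio] at hm; omega
    exact ⟨⟨_, ⟨_, hi, rfl⟩, v, (restrictF_bitBelow_nil hv m).symm⟩,
      dependsOn_bitBelow s m⟩

lemma ncard_nodesAt_bitBelow_nil (b t : ℕ) :
    (nodesAt (bitBelow [] '' Set.Iio b) t).ncard = b - Nat.log 2 (t + 1) := by
  obtain ⟨s, rfl⟩ := varIdx_surjective t
  rw [nodesAt_bitBelow_nil, Set.ncard_image_of_injective _ (bitBelow_injective s),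
    ← Finset.coe_range, Set.ncard_coe_finset, Finset.card_range, log_varIdx_add_one]

lemma sum_range_sub_log_succ (b : ℕ) :
    ∑ t ∈ Finset.range (2 ^ b - 1), (b - Nat.log 2 (t + 1)) = 2 ^ (b + 1) - b - 2 := by
  induction b with
  | zero => simp
  | succ b ih =>
    have hpow : 2 ^ (b + 1) - 1 = (2 ^ b - 1) + 2 ^ b := by
      have := Nat.one_le_two_pow (n := b); rw [pow_succ]; omega
    have lower : ∀ t ∈ Finset.range (2 ^ b - 1),
        b + 1 - Nat.log 2 (t + 1) = (b - Nat.log 2 (t + 1)) + 1 := by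
      intro t ht
      have : Nat.log 2 (t + 1) < b :=
        Nat.log_lt_of_lt_pow (by omega) (by simp only [Finset.mem_range] at ht; omega)
      omega
    have upper : ∀ t ∈ Finset.range (2 ^ b), b + 1 - Nat.log 2 (2 ^ b - 1 + t + 1) = 1 := by
      intro t ht
      have := Nat.one_le_two_pow (n := b)
      rw [Finset.mem_range] at ht
      rw [Nat.log_eq_of_pow_le_of_lt_pow (m := b) (by omega) (by rw [pow_succ]; omega)]
      omega
    rw [hpow, Finset.sum_range_add, Finset.sum_congr rfl lower, Finset.sum_congr rfl upper,
      Finset.sum_add_distrib, ih]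
    simp only [Finset.sum_const, Finset.card_range, smul_eq_mul, mul_one]
    have := Nat.lt_two_pow_self (n := b)
    rw [show 2 ^ (b + 1 + 1) = 4 * 2 ^ b by ring, show 2 ^ (b + 1) = 2 * 2 ^ b by ring]
    omega

theorem bitwise_int_bdd_size_general (b : ℕ) :
    bddNodeCount {f | ∃ i < b, f = fun x => x (varIdx (chosenPrefix x i))}
        (2 ^ b - 1) =
      2 ^ (b + 1) - b - 2 := by
  have roots : {f | ∃ i < b, f = fun x => x (varIdx (chosenPrefix x i))} =
      bitBelow [] '' Set.Iio b := by
    ext f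
    simp only [chosenPrefix_eq_descend, Set.mem_ofPred_eq, Set.mem_image, Set.mem_Iio, eq_comm]
    rfl
  change ∑ t ∈ Finset.range (2 ^ b - 1), (nodesAt _ t).ncard = _
  simp only [roots, ncard_nodesAt_bitBelow_nil]
  exact sum_range_sub_log_succ b

/-- The reduced multi-rooted BDD (in flip evaluation order) for the BITWISE_INT
encoding of a distribution over `{0, …, 2^b - 1}` — whose root for bit `i` is the
variable `x_s` reached after choosing the `i` previous (more significant) bits —
has exactly `Σ_{i=1}^{b} (2^i - 1) = 2^(b+1) - b - 2` decision nodes. -/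
theorem bitwise_int_bdd_size (b : ℕ) (hb : 1 ≤ b) :
    bddNodeCount {f | ∃ i < b, f = fun x => x (varIdx (chosenPrefix x i))}
        (2 ^ b - 1) =
      2 ^ (b + 1) - b - 2 :=
  bitwise_int_bdd_size_general b
end
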